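/- Let U ∈ ℝ^{n×r} have orthonormal columns and P be a selection matrix with PᵀU invertible. Then the DEIM projector 𝒫 = U (PᵀU)⁻¹ Pᵀ has spectral norm ‖𝒫‖₂ = ‖(PᵀU)⁻¹‖₂, provided r < n; in particular ‖𝒫‖₂ ≥ 1. -/

import Mathlib

/-! Since `U` and `P` have orthonormal columns, multiplying by `U` on the left or by `Pᵀ` on the
right cannot increase the spectral norm, and `M = Uᵀ (U M Pᵀ) P` shows it cannot decrease it
either; so `‖U M Pᵀ‖ = ‖M‖` for `M = (PᵀU)⁻¹`. Moreover `‖PᵀU‖ ≤ 1`, hence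
`1 = ‖(PᵀU)⁻¹ (PᵀU)‖ ≤ ‖(PᵀU)⁻¹‖`. -/

open Matrix

/-- `P` is a selection matrix: its columns are distinct standard basis vectors of `ℝⁿ`. -/
def IsSelection {n p : ℕ} (P : Matrix (Fin n) (Fin p) ℝ) : Prop :=
  ∃ g : Fin p → Fin n, Function.Injective g ∧
    P = Matrix.of fun i j => if i = g j then (1 : ℝ) else 0

/-- The spectral (Euclidean operator) norm of a real matrix. -/
noncomputable def specNorm {m n : ℕ} (A : Matrix (Fin m) (Fin n) ℝ) : ℝ :=
  ‖LinearMap.toContinuousLinearMap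
      (Matrix.toEuclideanLin A : EuclideanSpace ℝ (Fin n) →ₗ[ℝ] EuclideanSpace ℝ (Fin m))‖

/-- The Euclidean norm of a vector in `ℝⁿ`. -/
noncomputable def vecNorm {n : ℕ} (f : Fin n → ℝ) : ℝ :=
  ‖(WithLp.equiv 2 (Fin n → ℝ)).symm f‖

lemma IsSelection.transpose_mul_self {n p : ℕ} {P : Matrix (Fin n) (Fin p) ℝ}
    (hP : IsSelection P) : Pᵀ * P = 1 := by
  obtain ⟨g, hg, rfl⟩ := hP
  ext j k
  simp [Matrix.mul_apply, Matrix.one_apply, hg.eq_iff, eq_comm]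

namespace Matrix

open scoped Matrix.Norms.L2Operator

variable {𝕜 : Type*} [RCLike 𝕜] {k l m n : Type*} [Fintype k] [Fintype l] [Fintype m] [Fintype n]

lemma l2_opNorm_le_one_of_conjTranspose_mul_self [DecidableEq n] {A : Matrix m n 𝕜}
    (h : Aᴴ * A = 1) : ‖A‖ ≤ 1 := by
  have hsq : ‖A‖ * ‖A‖ ≤ 1 := by
    rw [← l2_opNorm_conjTranspose_mul_self, h]
    rcases isEmpty_or_nonempty n with hn | hn
    · simp [Subsingleton.elim (1 : Matrix n n 𝕜) 0]
    · exact norm_one.le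
  nlinarith [norm_nonneg A]

lemma l2_opNorm_mul_mul_le [DecidableEq l] [DecidableEq m] [DecidableEq n] {V : Matrix k l 𝕜}
    {W : Matrix m n 𝕜} (hV : ‖V‖ ≤ 1) (hW : ‖W‖ ≤ 1) (M : Matrix l m 𝕜) : ‖V * M * W‖ ≤ ‖M‖ :=
  calc ‖V * M * W‖ ≤ ‖V‖ * ‖M‖ * ‖W‖ := by
        grw [l2_opNorm_mul (V * M), l2_opNorm_mul V]
    _ ≤ 1 * ‖M‖ * 1 := by gcongr
    _ = ‖M‖ := by ring

lemma l2_opNorm_mul_mul_conjTranspose [DecidableEq l] [DecidableEq m] [DecidableEq n]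
    {V : Matrix k l 𝕜} {W : Matrix m n 𝕜} (hV : Vᴴ * V = 1) (hW : Wᴴ * W = 1) (M : Matrix l n 𝕜) :
    ‖V * M * Wᴴ‖ = ‖M‖ := by
  classical
  have hVn := l2_opNorm_le_one_of_conjTranspose_mul_self hV
  have hWn := l2_opNorm_le_one_of_conjTranspose_mul_self hW
  refine le_antisymm (l2_opNorm_mul_mul_le hVn (by rwa [l2_opNorm_conjTranspose]) M) ?_
  calc ‖M‖ = ‖Vᴴ * (V * M * Wᴴ) * W‖ := by
        simp only [← Matrix.mul_assoc, hV, Matrix.one_mul]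
        rw [Matrix.mul_assoc, hW, Matrix.mul_one]
    _ ≤ ‖V * M * Wᴴ‖ := l2_opNorm_mul_mul_le (by rwa [l2_opNorm_conjTranspose]) hWn _

lemma one_le_l2_opNorm_inv [DecidableEq n] [Nonempty n] {A : Matrix n n 𝕜} (hA : IsUnit A)
    (h : ‖A‖ ≤ 1) : 1 ≤ ‖A⁻¹‖ :=
  calc (1 : ℝ) = ‖A⁻¹ * A‖ := by
        rw [nonsing_inv_mul A ((isUnit_iff_isUnit_det A).mp hA), norm_one]
    _ ≤ ‖A⁻¹‖ * ‖A‖ := l2_opNorm_mul _ _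
    _ ≤ ‖A⁻¹‖ := mul_le_of_le_one_right (norm_nonneg _) h

end Matrix

open scoped Matrix.Norms.L2Operator

theorem deim_projector_norm_general {n r : ℕ} (U : Matrix (Fin n) (Fin r) ℝ)
    (P : Matrix (Fin n) (Fin r) ℝ) (hU : Uᵀ * U = 1) (hP : IsSelection P)
    (hinv : IsUnit (Pᵀ * U)) (hr : 0 < r) :
    specNorm (U * (Pᵀ * U)⁻¹ * Pᵀ) = specNorm (Pᵀ * U)⁻¹ ∧
    1 ≤ specNorm (U * (Pᵀ * U)⁻¹ * Pᵀ) := by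
  have : Nonempty (Fin r) := ⟨⟨0, hr⟩⟩
  have hU' : Uᴴ * U = 1 := by rwa [conjTranspose_eq_transpose_of_trivial]
  have hP' : Pᴴ * P = 1 := by
    rw [conjTranspose_eq_transpose_of_trivial]; exact hP.transpose_mul_self
  have hnorm : ‖U * (Pᵀ * U)⁻¹ * Pᵀ‖ = ‖(Pᵀ * U)⁻¹‖ := by
    simpa only [conjTranspose_eq_transpose_of_trivial] using
      l2_opNorm_mul_mul_conjTranspose hU' hP' (Pᵀ * U)⁻¹
  have hPU : ‖Pᵀ * U‖ ≤ 1 := by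
    grw [l2_opNorm_mul, ← conjTranspose_eq_transpose_of_trivial, l2_opNorm_conjTranspose,
      l2_opNorm_le_one_of_conjTranspose_mul_self hP',
      l2_opNorm_le_one_of_conjTranspose_mul_self hU', one_mul]
  exact ⟨hnorm, (one_le_l2_opNorm_inv hinv hPU).trans hnorm.ge⟩

/-- The spectral norm of the DEIM projector equals `‖(PᵀU)⁻¹‖₂` when `r < n`,
and in particular it is at least one. -/
theorem deim_projector_norm {n r : ℕ} (U : Matrix (Fin n) (Fin r) ℝ)
    (P : Matrix (Fin n) (Fin r) ℝ) (hU : Uᵀ * U = 1) (hP : IsSelection P)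
    (hinv : IsUnit (Pᵀ * U)) (hr : 0 < r) (hrn : r < n) :
    specNorm (U * (Pᵀ * U)⁻¹ * Pᵀ) = specNorm (Pᵀ * U)⁻¹ ∧
    1 ≤ specNorm (U * (Pᵀ * U)⁻¹ * Pᵀ) :=
  deim_projector_norm_general U P hU hP hinv hr
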